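/- arXiv:2310.05282 — 2 statements merged into one kernel-verified Lean document; each statement's English description precedes it below -/
import Mathlib

section
/- For formal power series: if A(x) = Σ_{n≥0} (2n−1)!! xⁿ (with (−1)!! = 1) is the ordinary generating function of chord diagrams, then there exists a unique formal power series I(x) with I(0) = 0 satisfying A(x) = 1 + I(x·A(x)²). -/
open PowerSeries

/-- Composition `f ∘ g` of formal power series, valid when `g` has zero constant
term: the coefficient of `xⁿ` in `f(g(x))` is `∑_{k ≤ n} f_k [xⁿ] g^k`. -/
noncomputable def substC (g f : PowerSeries ℚ) : PowerSeries ℚ :=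
  PowerSeries.mk fun n =>
    ∑ k ∈ Finset.range (n + 1), (coeff k f) * (coeff n (g ^ k))

/-- The OGF of chord diagrams, `A(x) = ∑ (2n-1)!! xⁿ` (with `(-1)!! = 1`). -/
noncomputable def A : PowerSeries ℚ :=
  PowerSeries.mk fun n => (Nat.doubleFactorial (2 * n - 1) : ℚ)

/-!
Substitution of a series `g` with `g(0) = 0` and `g'(0) ≠ 0` is triangular in the monomial
basis: `gᵏ` starts with `g'(0)ᵏ xᵏ`. So the coefficients of the unique `I` with
`I(x A(x)²) = A(x) - 1` are solved for one at a time, and `I(0) = 0` is forced because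
substitution preserves constant terms.
-/

section Substitution

variable {g : ℚ⟦X⟧}

lemma coeff_pow_self (hg : constantCoeff g = 0) (n : ℕ) :
    coeff n (g ^ n) = coeff 1 g ^ n := by
  obtain ⟨u, rfl⟩ := X_dvd_iff.mpr hg
  rw [mul_pow, coeff_X_pow_mul', if_pos le_rfl, Nat.sub_self, coeff_zero_eq_constantCoeff_apply,
    map_pow, coeff_succ_X_mul, coeff_zero_eq_constantCoeff_apply]

lemma coeff_substC (f : ℚ⟦X⟧) (n : ℕ) :
    coeff n (substC g f) = ∑ k ∈ Finset.range (n + 1), coeff k f * coeff n (g ^ k) :=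
  coeff_mk _ _

lemma constantCoeff_substC (f : ℚ⟦X⟧) : constantCoeff (substC g f) = constantCoeff f := by
  rw [← coeff_zero_eq_constantCoeff_apply, coeff_substC]
  simp

lemma coeff_substC_eq_add (hg : constantCoeff g = 0) (f : ℚ⟦X⟧) (n : ℕ) :
    coeff n (substC g f) =
      coeff n f * coeff 1 g ^ n + ∑ k ∈ Finset.range n, coeff k f * coeff n (g ^ k) := by
  rw [coeff_substC, Finset.sum_range_succ, coeff_pow_self hg, add_comm]

noncomputable def substCPreimageCoeff (g B : ℚ⟦X⟧) (n : ℕ) : ℚ :=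
  (coeff n B - ∑ k ∈ (Finset.range n).attach,
      substCPreimageCoeff g B k * coeff n (g ^ (k : ℕ))) / coeff 1 g ^ n
  decreasing_by exact Finset.mem_range.mp k.2

lemma substCPreimageCoeff_eq (g B : ℚ⟦X⟧) (n : ℕ) :
    substCPreimageCoeff g B n =
      (coeff n B - ∑ k ∈ Finset.range n, substCPreimageCoeff g B k * coeff n (g ^ k)) /
        coeff 1 g ^ n := by
  rw [substCPreimageCoeff, Finset.sum_attach (Finset.range n)
    (fun k => substCPreimageCoeff g B k * coeff n (g ^ k))]

lemma substC_mk_substCPreimageCoeff (hg : constantCoeff g = 0) (hg₁ : coeff 1 g ≠ 0)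
    (B : ℚ⟦X⟧) : substC g (mk (substCPreimageCoeff g B)) = B := by
  ext n
  simp only [coeff_substC_eq_add hg, coeff_mk]
  rw [substCPreimageCoeff_eq, div_mul_cancel₀ _ (pow_ne_zero n hg₁), sub_add_cancel]

lemma substC_injective (hg : constantCoeff g = 0) (hg₁ : coeff 1 g ≠ 0) :
    Function.Injective (substC g) := by
  intro f f' h
  ext n
  induction n using Nat.strong_induction_on with
  | _ n ih =>
    have hn := congrArg (coeff n) h
    rw [coeff_substC_eq_add hg, coeff_substC_eq_add hg,
      Finset.sum_congr rfl fun k hk => by rw [ih k (Finset.mem_range.mp hk)]] at hn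
    exact mul_right_cancel₀ (pow_ne_zero n hg₁) (add_right_cancel hn)

lemma existsUnique_substC_eq (hg : constantCoeff g = 0) (hg₁ : coeff 1 g ≠ 0) (B : ℚ⟦X⟧) :
    ∃! f, substC g f = B :=
  ⟨_, substC_mk_substCPreimageCoeff hg hg₁ B, fun _ hf =>
    substC_injective hg hg₁ (hf.trans (substC_mk_substCPreimageCoeff hg hg₁ B).symm)⟩

end Substitution

lemma constantCoeff_A : constantCoeff A = 1 := by
  simp [A, ← coeff_zero_eq_constantCoeff_apply]

theorem connected_chord_diagrams_exist_unique :
    ∃! I : PowerSeries ℚ,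
      constantCoeff I = 0 ∧ A = 1 + substC (PowerSeries.X * A ^ 2) I := by
  have hg : constantCoeff (X * A ^ 2) = 0 := by simp
  have hg₁ : coeff 1 (X * A ^ 2) ≠ 0 := by
    simp [coeff_succ_X_mul, coeff_zero_eq_constantCoeff_apply, constantCoeff_A]
  obtain ⟨I, hI, hunique⟩ := existsUnique_substC_eq hg hg₁ (A - 1)
  refine ⟨I, ⟨?_, by rw [hI]; ring⟩, fun J ⟨_, hJ⟩ => hunique J (eq_sub_of_add_eq' hJ.symm)⟩
  rw [← constantCoeff_substC (g := X * A ^ 2), hI, map_sub, constantCoeff_A, map_one, sub_self]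
end

section
/- The number of labelled digraphs on n vertices with exactly two strongly connected components equals Σ_{k=1}^{n-1} C(n,k) · scd_k · scd_{n−k} · (2^{k(n−k)} − 1) + (1/2) Σ_{k=1}^{n-1} C(n,k) · scd_k · scd_{n−k}. Here the first sum counts the case where the two components are joined by edges in only one direction, and the second sum counts the case where the two components are disconnected. -/
/-- A labelled digraph on `Fin n`: a set of ordered pairs `(u,v)` with `u ≠ v`. -/
def Dgr (n : ℕ) := {f : Fin n → Fin n → Bool // ∀ v, f v v = false}

/-- Reachability in a digraph. -/
def Reach {n : ℕ} (D : Dgr n) : Fin n → Fin n → Prop :=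
  Relation.ReflTransGen (fun a b => D.1 a b = true)

/-- The mutual-reachability equivalence relation. -/
def sccSetoid {n : ℕ} (D : Dgr n) : Setoid (Fin n) where
  r u v := Reach D u v ∧ Reach D v u
  iseqv := ⟨fun _ => ⟨.refl, .refl⟩, fun h => ⟨h.2, h.1⟩,
    fun h1 h2 => ⟨h1.1.trans h2.1, h2.2.trans h1.2⟩⟩

/-- The strongly connected components of `D`. -/
def SCC {n : ℕ} (D : Dgr n) := Quotient (sccSetoid D)

/-- The number of strongly connected components of `D`. -/
noncomputable def sccCount {n : ℕ} (D : Dgr n) : ℕ := Nat.card (SCC D)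

/-- The number of labelled digraphs on `n` vertices with exactly two strongly
connected components. -/
noncomputable def S2 (n : ℕ) : ℕ := Nat.card {D : Dgr n // sccCount D = 2}

/-- `scd m` : the number of strongly connected labelled digraphs on `m` vertices. -/
noncomputable def scd (m : ℕ) : ℕ := Nat.card {D : Dgr m // ∀ u v, Reach D u v}

namespace TwoSCC

open Relation Finset

variable {n : ℕ}

instance : Finite (Dgr n) := Subtype.finite

/-- Reachability staying inside a set `S`. -/
def ReachIn (D : Dgr n) (S : Set (Fin n)) : Fin n → Fin n → Prop :=
  Relation.ReflTransGen (fun a b => a ∈ S ∧ b ∈ S ∧ D.1 a b = true)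

lemma ReachIn.reach {D : Dgr n} {S : Set (Fin n)} {u v : Fin n}
    (h : ReachIn D S u v) : Reach D u v :=
  ReflTransGen.mono (fun _ _ hab => hab.2.2) _ _ h

lemma ReachIn.mono {D : Dgr n} {S T : Set (Fin n)} (hST : S ⊆ T) {u v : Fin n}
    (h : ReachIn D S u v) : ReachIn D T u v :=
  ReflTransGen.mono (fun _ _ hab => ⟨hST hab.1, hST hab.2.1, hab.2.2⟩) _ _ h

/-- If no edge enters `S` from outside, reverse reachability into `S` forces membership. -/
lemma mem_of_reach_closed {D : Dgr n} {S : Set (Fin n)}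
    (hcl : ∀ a b, a ∉ S → b ∈ S → D.1 a b = false) {u v : Fin n}
    (h : Reach D v u) (hu : u ∈ S) : v ∈ S := by
  induction h using Relation.ReflTransGen.head_induction_on with
  | refl => exact hu
  | head h' _ ih =>
      by_contra hv
      have := hcl _ _ hv ih
      rw [h'] at this
      exact Bool.noConfusion this

/-- A reachability path between two mutually reachable vertices stays inside
their common strong component. -/
lemma reachIn_class {D : Dgr n} {u v : Fin n} (h : Reach D u v) (h' : Reach D v u) :
    ReachIn D {w | Reach D u w ∧ Reach D w u} u v := by
  induction h with
  | refl => exact .refl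
  | @tail b c h1 h2 ih =>
      have hcu : Reach D c u := h'
      have hbc : Reach D b c := ReflTransGen.single h2
      have hbu : Reach D b u := hbc.trans hcu
      have hib : ReachIn D {w | Reach D u w ∧ Reach D w u} u b := ih hbu
      have hub : Reach D u b := hib.reach
      exact hib.tail ⟨⟨hub, hbu⟩, ⟨hub.trans hbc, hcu⟩, h2⟩

/-- The structural condition: `A` and its complement are nonempty, no edges enter `A`
from outside, and both `A` and its complement are internally strongly connected. -/
def Cond (A : Finset (Fin n)) (D : Dgr n) : Prop :=
  A.Nonempty ∧ Aᶜ.Nonempty ∧ (∀ a b, a ∉ A → b ∈ A → D.1 a b = false) ∧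
  (∀ u v, u ∈ A → v ∈ A → ReachIn D (↑A) u v) ∧
  (∀ u v, u ∉ A → v ∉ A → ReachIn D (↑(Aᶜ)) u v)

def Cond0 (A : Finset (Fin n)) (D : Dgr n) : Prop :=
  Cond A D ∧ ∀ a b, a ∈ A → b ∉ A → D.1 a b = false

lemma cond_mem_of_reach {A : Finset (Fin n)} {D : Dgr n} (h : Cond A D)
    {u v : Fin n} (hr : Reach D v u) (hu : u ∈ A) : v ∈ A :=
  mem_of_reach_closed (S := ↑A) (fun a b ha hb => h.2.2.1 a b ha hb) hr hu

/-- `Cond A D` implies `D` has exactly two strongly connected components. -/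
lemma cond_scc_two {A : Finset (Fin n)} {D : Dgr n} (h : Cond A D) :
    sccCount D = 2 := by
  obtain ⟨hA, hAc, hcl, hsA, hsB⟩ := h
  have key : ∀ x y : Fin n, (sccSetoid D).r x y → (decide (x ∈ A)) = (decide (y ∈ A)) := by
    intro x y hxy
    by_cases hx : x ∈ A
    · have hy : y ∈ A := cond_mem_of_reach ⟨hA, hAc, hcl, hsA, hsB⟩ hxy.2 hx
      simp [hx, hy]
    · have hy : y ∉ A := fun hy => hx (cond_mem_of_reach ⟨hA, hAc, hcl, hsA, hsB⟩ hxy.1 hy)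
      simp [hx, hy]
  let f : SCC D → Bool := Quotient.lift (fun x => decide (x ∈ A)) key
  have hbij : Function.Bijective f := by
    constructor
    · rintro ⟨x⟩ ⟨y⟩ hf
      change decide (x ∈ A) = decide (y ∈ A) at hf
      by_cases hx : x ∈ A
      · have hy : y ∈ A := by simpa [hx] using hf
        exact Quotient.sound ⟨(hsA x y hx hy).reach, (hsA y x hy hx).reach⟩
      · have hy : y ∉ A := by simpa [hx] using hf
        exact Quotient.sound ⟨(hsB x y hx hy).reach, (hsB y x hy hx).reach⟩
    · intro b
      cases b with
      | true => exact ⟨Quotient.mk _ hA.choose, by simp [f, hA.choose_spec]⟩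
      | false =>
          obtain ⟨c, hc⟩ := hAc
          exact ⟨Quotient.mk _ c, by simp [f, (Finset.mem_compl.mp hc)]⟩
  have : Nat.card (SCC D) = Nat.card Bool := Nat.card_congr (Equiv.ofBijective f hbij)
  simpa [sccCount, Nat.card_eq_fintype_card] using this

section Classify

open scoped Classical

variable {D : Dgr n}

/-- The strong component of `z` as a finset. -/
noncomputable def cls (D : Dgr n) (z : SCC D) : Finset (Fin n) :=
  Finset.univ.filter (fun w => Quotient.mk (sccSetoid D) w = z)

lemma mem_cls {z : SCC D} {w : Fin n} : w ∈ cls D z ↔ Quotient.mk (sccSetoid D) w = z := by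
  simp [cls]

lemma mem_cls_mk {a w : Fin n} :
    w ∈ cls D (Quotient.mk (sccSetoid D) a) ↔
      Quotient.mk (sccSetoid D) w = Quotient.mk (sccSetoid D) a := mem_cls

lemma cls_nonempty (z : SCC D) : (cls D z).Nonempty :=
  ⟨z.out, mem_cls.mpr (Quotient.out_eq z)⟩

lemma cls_strong {z : SCC D} {u v : Fin n} (hu : u ∈ cls D z) (hv : v ∈ cls D z) :
    ReachIn D (↑(cls D z)) u v := by
  have he : Quotient.mk (sccSetoid D) u = Quotient.mk (sccSetoid D) v := by
    rw [mem_cls.mp hu, mem_cls.mp hv]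
  have huv : (sccSetoid D).r u v := Quotient.exact he
  refine (reachIn_class huv.1 huv.2).mono ?_
  intro w hw
  have : (sccSetoid D).r u w := ⟨hw.1, hw.2⟩
  rw [Finset.mem_coe, mem_cls, ← mem_cls.mp hu]
  exact Quotient.sound ((sccSetoid D).iseqv.symm this)

lemma no_back {a b : Fin n} (hab : D.1 a b = true)
    (hne : Quotient.mk (sccSetoid D) a ≠ Quotient.mk (sccSetoid D) b) :
    ∀ c d, Quotient.mk (sccSetoid D) c = Quotient.mk (sccSetoid D) b →
      Quotient.mk (sccSetoid D) d = Quotient.mk (sccSetoid D) a → D.1 c d = false := by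
  intro c d hc hd
  by_contra h
  rw [Bool.not_eq_false] at h
  have hbc : (sccSetoid D).r b c := Quotient.exact hc.symm
  have hda : (sccSetoid D).r d a := Quotient.exact hd
  have hRab : Reach D a b := ReflTransGen.single hab
  have hRcd : Reach D c d := ReflTransGen.single h
  have hRba : Reach D b a := (hbc.1.trans hRcd).trans hda.1
  exact hne (Quotient.sound ⟨hRab, hRba⟩)

/-- Under `Cond A D`, the set `A` is exactly the strong component of any of its elements. -/
lemma cond_eq_cls {A : Finset (Fin n)} (h : Cond A D) {a : Fin n} (ha : a ∈ A) :
    A = cls D (Quotient.mk (sccSetoid D) a) := by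
  ext w
  rw [mem_cls_mk]
  constructor
  · intro hw
    exact Quotient.sound ⟨(h.2.2.2.1 w a hw ha).reach, (h.2.2.2.1 a w ha hw).reach⟩
  · intro hw
    have : (sccSetoid D).r w a := Quotient.exact hw
    exact cond_mem_of_reach h this.1 ha

lemma cond_cls (z : SCC D)
    (hno : ∀ c d, c ∉ cls D z → d ∈ cls D z → D.1 c d = false)
    (hc : (cls D z)ᶜ.Nonempty)
    (hstrC : ∀ u v, u ∉ cls D z → v ∉ cls D z → ReachIn D (↑((cls D z)ᶜ)) u v) :
    Cond (cls D z) D :=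
  ⟨cls_nonempty z, hc, hno, fun _ _ hu hv => cls_strong hu hv, hstrC⟩

end Classify

lemma fiber_count {D : Dgr n} (hD : sccCount D = 2) :
    2 * Nat.card {A : Finset (Fin n) // Cond A D}
      = 2 + Nat.card {A : Finset (Fin n) // Cond0 A D} := by
  obtain ⟨x, y, hxy, hcov⟩ := Nat.card_eq_two_iff.mp hD
  have hall : ∀ z : SCC D, z = x ∨ z = y := by
    intro z
    have : z ∈ ({x, y} : Set (SCC D)) := hcov ▸ Set.mem_univ z
    simpa using this
  have hc : ∀ z w : SCC D, z ≠ w → (∀ u : SCC D, u = z ∨ u = w) →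
      (cls D z)ᶜ = cls D w := by
    intro z w hzw hcov'
    ext v
    simp only [Finset.mem_compl, mem_cls]
    constructor
    · intro h
      rcases hcov' (Quotient.mk (sccSetoid D) v) with h' | h'
      · exact absurd h' h
      · exact h'
    · intro h h'
      exact hzw (h' ▸ h)
  have hcond : ∀ z w : SCC D, z ≠ w → (∀ u : SCC D, u = z ∨ u = w) →
      (∀ c d, c ∉ cls D z → d ∈ cls D z → D.1 c d = false) → Cond (cls D z) D := by
    intro z w hzw hcov' hno
    have hcc : (cls D z)ᶜ = cls D w := hc z w hzw hcov'
    refine cond_cls z hno (hcc ▸ cls_nonempty w) ?_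
    intro u v hu hv
    rw [hcc]
    refine cls_strong ?_ ?_ <;> rw [mem_cls]
    · rcases hcov' (Quotient.mk (sccSetoid D) u) with h | h
      · exact absurd (mem_cls.mpr h) hu
      · exact h
    · rcases hcov' (Quotient.mk (sccSetoid D) v) with h | h
      · exact absurd (mem_cls.mpr h) hv
      · exact h
  by_cases hcross : ∃ a b, D.1 a b = true ∧
      Quotient.mk (sccSetoid D) a ≠ Quotient.mk (sccSetoid D) b
  · obtain ⟨a, b, hab, hne⟩ := hcross
    have hcovab : ∀ u : SCC D, u = Quotient.mk (sccSetoid D) a ∨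
        u = Quotient.mk (sccSetoid D) b := by
      intro u
      rcases hall (Quotient.mk (sccSetoid D) a) with h1 | h1 <;>
        rcases hall (Quotient.mk (sccSetoid D) b) with h2 | h2 <;>
        rcases hall u with h3 | h3 <;> simp_all <;> exact absurd rfl hne
    have hnoin : ∀ c d, c ∉ cls D (Quotient.mk (sccSetoid D) a) →
        d ∈ cls D (Quotient.mk (sccSetoid D) a) → D.1 c d = false := by
      intro c d hc' hd
      refine no_back hab hne c d ?_ (mem_cls.mp hd)
      rcases hcovab (Quotient.mk (sccSetoid D) c) with h | h
      · exact absurd (mem_cls.mpr h) hc'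
      · exact h
    have hcondA : Cond (cls D (Quotient.mk (sccSetoid D) a)) D :=
      hcond _ _ hne hcovab hnoin
    have huniq : ∀ A, Cond A D → A = cls D (Quotient.mk (sccSetoid D) a) := by
      intro A hA
      obtain ⟨e, he⟩ := hA.1
      have hAe := cond_eq_cls hA he
      rcases hcovab (Quotient.mk (sccSetoid D) e) with h | h
      · rw [hAe, h]
      · exfalso
        have hbA : b ∈ A := by rw [hAe, mem_cls_mk, h]
        have haA : a ∉ A := by
          rw [hAe, mem_cls_mk, h]
          exact hne
        have := hA.2.2.1 a b haA hbA
        rw [hab] at this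
        exact Bool.noConfusion this
    have h1 : Nat.card {A : Finset (Fin n) // Cond A D} = 1 := by
      rw [Nat.card_eq_one_iff_unique]
      exact ⟨⟨fun p q => Subtype.ext ((huniq p.1 p.2).trans (huniq q.1 q.2).symm)⟩,
        ⟨⟨_, hcondA⟩⟩⟩
    have h0 : Nat.card {A : Finset (Fin n) // Cond0 A D} = 0 := by
      have : IsEmpty {A : Finset (Fin n) // Cond0 A D} := by
        refine ⟨fun p => ?_⟩
        obtain ⟨A, hA⟩ := p
        have hA' := huniq A hA.1
        have haA : a ∈ A := by rw [hA', mem_cls_mk]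
        have hbA : b ∉ A := by
          rw [hA', mem_cls_mk]
          exact fun h => hne h.symm
        have := hA.2 a b haA hbA
        rw [hab] at this
        exact Bool.noConfusion this
      simp [Nat.card_of_isEmpty]
    rw [h1, h0]
  · push_neg at hcross
    have hno : ∀ a b, Quotient.mk (sccSetoid D) a ≠ Quotient.mk (sccSetoid D) b →
        D.1 a b = false := by
      intro a b h
      by_contra h'
      rw [Bool.not_eq_false] at h'
      exact h (hcross a b h')
    have hally : ∀ u : SCC D, u = y ∨ u = x := fun u => (hall u).symm
    have hcx : Cond0 (cls D x) D := by
      refine ⟨hcond x y hxy hall ?_, ?_⟩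
      · intro c d hc' hd
        exact hno c d (fun h => hc' (mem_cls.mpr (h.trans (mem_cls.mp hd))))
      · intro a b ha hb
        exact hno a b (fun h => hb (mem_cls.mpr (h.symm.trans (mem_cls.mp ha))))
    have hcy : Cond0 (cls D y) D := by
      refine ⟨hcond y x hxy.symm hally ?_, ?_⟩
      · intro c d hc' hd
        exact hno c d (fun h => hc' (mem_cls.mpr (h.trans (mem_cls.mp hd))))
      · intro a b ha hb
        exact hno a b (fun h => hb (mem_cls.mpr (h.symm.trans (mem_cls.mp ha))))
    have hclsne : cls D x ≠ cls D y := by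
      intro h
      have hx : x.out ∈ cls D x := mem_cls.mpr (Quotient.out_eq x)
      rw [h, mem_cls] at hx
      exact hxy ((Quotient.out_eq x).symm.trans hx)
    have huniq2 : ∀ A, Cond A D → A = cls D x ∨ A = cls D y := by
      intro A hA
      obtain ⟨e, he⟩ := hA.1
      have hAe := cond_eq_cls hA he
      rcases hall (Quotient.mk (sccSetoid D) e) with h | h
      · exact Or.inl (by rw [hAe, h])
      · exact Or.inr (by rw [hAe, h])
    have h2 : Nat.card {A : Finset (Fin n) // Cond A D} = 2 := by
      rw [Nat.card_eq_two_iff]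
      refine ⟨⟨cls D x, hcx.1⟩, ⟨cls D y, hcy.1⟩,
        fun h => hclsne (congrArg Subtype.val h), ?_⟩
      rw [Set.eq_univ_iff_forall]
      rintro ⟨A, hA⟩
      rcases huniq2 A hA with h | h
      · exact Or.inl (Subtype.ext h)
      · exact Or.inr (Subtype.ext h)
    have h2' : Nat.card {A : Finset (Fin n) // Cond0 A D} = 2 := by
      rw [Nat.card_eq_two_iff]
      refine ⟨⟨cls D x, hcx⟩, ⟨cls D y, hcy⟩,
        fun h => hclsne (congrArg Subtype.val h), ?_⟩
      rw [Set.eq_univ_iff_forall]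
      rintro ⟨A, hA⟩
      rcases huniq2 A hA.1 with h | h
      · exact Or.inl (Subtype.ext h)
      · exact Or.inr (Subtype.ext h)
    rw [h2, h2']

section Count

/-- Strong irreflexive digraph structures on a type. -/
def SD (α : Type) := {f : α → α → Bool // (∀ v, f v v = false) ∧
  ∀ u v, Relation.ReflTransGen (fun a b => f a b = true) u v}

def SD.congr {α β : Type} (e : α ≃ β) : SD α ≃ SD β where
  toFun f := ⟨fun x y => f.1 (e.symm x) (e.symm y), fun v => f.2.1 _, by
    intro u v
    have h := Relation.ReflTransGen.lift e
      (p := fun x y => f.1 (e.symm x) (e.symm y) = true)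
      (fun a b h => by simpa [Function.onFun] using h) _ _ (f.2.2 (e.symm u) (e.symm v))
    simpa [Function.onFun] using h⟩
  invFun f := ⟨fun x y => f.1 (e x) (e y), fun v => f.2.1 _, by
    intro u v
    have h := Relation.ReflTransGen.lift e.symm
      (p := fun x y => f.1 (e x) (e y) = true)
      (fun a b h => by simpa [Function.onFun] using h) _ _ (f.2.2 (e u) (e v))
    simpa [Function.onFun] using h⟩
  left_inv f := by
    apply Subtype.ext
    funext x y
    simp
  right_inv f := by
    apply Subtype.ext
    funext x y
    simp

lemma card_SD (α : Type) [Fintype α] : Nat.card (SD α) = scd (Fintype.card α) := by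
  have e1 : SD α ≃ SD (Fin (Fintype.card α)) := SD.congr (Fintype.equivFin α)
  have e2 : SD (Fin (Fintype.card α)) ≃
      {D : Dgr (Fintype.card α) // ∀ u v, Reach D u v} :=
    { toFun := fun f => ⟨⟨f.1, f.2.1⟩, f.2.2⟩
      invFun := fun D => ⟨D.1.1, D.1.2, D.2⟩
      left_inv := fun f => rfl
      right_inv := fun D => rfl }
  rw [scd, Nat.card_congr (e1.trans e2)]

lemma nat_card_sigma {ι : Type} [Fintype ι] (f : ι → Type) [∀ i, Finite (f i)] :
    Nat.card (Σ i, f i) = ∑ i, Nat.card (f i) := by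
  have : ∀ i, Fintype (f i) := fun i => Fintype.ofFinite _
  classical
  simp [Nat.card_eq_fintype_card, Fintype.card_sigma]

lemma reachIn_to_subtype {D : Dgr n} {S : Set (Fin n)} {u v : Fin n} (hu : u ∈ S)
    (h : ReachIn D S u v) (hv : v ∈ S) :
    Relation.ReflTransGen (fun a b : S => D.1 a b = true) ⟨u, hu⟩ ⟨v, hv⟩ := by
  revert hv
  induction h with
  | refl => intro hv; exact .refl
  | tail h1 h2 ih => intro hv; exact (ih h2.1).tail h2.2.2

lemma subtype_to_reachIn {D : Dgr n} {S : Set (Fin n)} {u v : S}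
    (h : Relation.ReflTransGen (fun a b : S => D.1 a b = true) u v) :
    ReachIn D S u v :=
  Relation.ReflTransGen.lift Subtype.val (fun a b hab => ⟨a.2, b.2, hab⟩) _ _ h

end Count

section Glue

/-- Glue two digraphs on `A` and `Aᶜ` with cross edges `c` from `A` to `Aᶜ`. -/
def glue (A : Finset (Fin n)) (fA : {x // x ∈ A} → {x // x ∈ A} → Bool)
    (fB : {x // x ∈ Aᶜ} → {x // x ∈ Aᶜ} → Bool)
    (c : {x // x ∈ A} × {x // x ∈ Aᶜ} → Bool)
    (hfA : ∀ v, fA v v = false) (hfB : ∀ v, fB v v = false) : Dgr n :=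
  ⟨fun u v =>
    if hu : u ∈ A then
      if hv : v ∈ A then fA ⟨u, hu⟩ ⟨v, hv⟩
      else c (⟨u, hu⟩, ⟨v, Finset.mem_compl.mpr hv⟩)
    else
      if hv : v ∈ A then false
      else fB ⟨u, Finset.mem_compl.mpr hu⟩ ⟨v, Finset.mem_compl.mpr hv⟩,
   by intro v; by_cases h : v ∈ A <;> simp [h, hfA, hfB]⟩

variable {A : Finset (Fin n)}

lemma glue_AA {fA fB c hfA hfB} {u v : Fin n} (hu : u ∈ A) (hv : v ∈ A) :
    (glue A fA fB c hfA hfB).1 u v = fA ⟨u, hu⟩ ⟨v, hv⟩ := by simp [glue, hu, hv]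

lemma glue_AB {fA fB c hfA hfB} {u v : Fin n} (hu : u ∈ A) (hv : v ∉ A) :
    (glue A fA fB c hfA hfB).1 u v = c (⟨u, hu⟩, ⟨v, Finset.mem_compl.mpr hv⟩) := by
  simp [glue, hu, hv]

lemma glue_BA {fA fB c hfA hfB} {u v : Fin n} (hu : u ∉ A) (hv : v ∈ A) :
    (glue A fA fB c hfA hfB).1 u v = false := by simp [glue, hu, hv]

lemma glue_BB {fA fB c hfA hfB} {u v : Fin n} (hu : u ∉ A) (hv : v ∉ A) :
    (glue A fA fB c hfA hfB).1 u v
      = fB ⟨u, Finset.mem_compl.mpr hu⟩ ⟨v, Finset.mem_compl.mpr hv⟩ := by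
  simp [glue, hu, hv]

lemma glue_cond (hA : A.Nonempty) (hAc : Aᶜ.Nonempty)
    (fA : SD {x // x ∈ A}) (fB : SD {x // x ∈ Aᶜ})
    (c : {x // x ∈ A} × {x // x ∈ Aᶜ} → Bool) :
    Cond A (glue A fA.1 fB.1 c fA.2.1 fB.2.1) := by
  set D := glue A fA.1 fB.1 c fA.2.1 fB.2.1 with hDdef
  refine ⟨hA, hAc, fun a b ha hb => glue_BA ha hb, ?_, ?_⟩
  · intro u v hu hv
    have h := fA.2.2 ⟨u, hu⟩ ⟨v, hv⟩
    have h' : Relation.ReflTransGen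
        (fun a b : {x // x ∈ A} => D.1 a b = true) ⟨u, hu⟩ ⟨v, hv⟩ :=
      Relation.ReflTransGen.mono
        (fun a b hab => by rw [glue_AA a.2 b.2]; exact hab) _ _ h
    exact subtype_to_reachIn (S := (↑A : Set (Fin n))) h'
  · intro u v hu hv
    have hu' : u ∈ Aᶜ := Finset.mem_compl.mpr hu
    have hv' : v ∈ Aᶜ := Finset.mem_compl.mpr hv
    have h := fB.2.2 ⟨u, hu'⟩ ⟨v, hv'⟩
    have h' : Relation.ReflTransGen
        (fun a b : {x // x ∈ Aᶜ} => D.1 a b = true) ⟨u, hu'⟩ ⟨v, hv'⟩ :=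
      Relation.ReflTransGen.mono
        (fun a b hab => by
          rw [glue_BB (Finset.mem_compl.mp a.2) (Finset.mem_compl.mp b.2)]
          exact hab) _ _ h
    exact subtype_to_reachIn (S := (↑(Aᶜ) : Set (Fin n))) h'

/-- Restriction of a digraph satisfying `Cond A` to `A` is strong. -/
def restrictA (D : {D : Dgr n // Cond A D}) : SD {x // x ∈ A} :=
  ⟨fun a b => D.1.1 a b, fun v => D.1.2 v, by
    intro u v
    exact reachIn_to_subtype (S := (↑A : Set (Fin n))) u.2
      (D.2.2.2.2.1 u v u.2 v.2) v.2⟩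

def restrictB (D : {D : Dgr n // Cond A D}) : SD {x // x ∈ Aᶜ} :=
  ⟨fun a b => D.1.1 a b, fun v => D.1.2 v, by
    intro u v
    exact reachIn_to_subtype (S := (↑(Aᶜ) : Set (Fin n))) u.2
      (D.2.2.2.2.2 u v (Finset.mem_compl.mp u.2) (Finset.mem_compl.mp v.2)) v.2⟩

noncomputable def condEquiv (hA : A.Nonempty) (hAc : Aᶜ.Nonempty) :
    {D : Dgr n // Cond A D}
      ≃ SD {x // x ∈ A} × SD {x // x ∈ Aᶜ} × ({x // x ∈ A} × {x // x ∈ Aᶜ} → Bool) where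
  toFun D := (restrictA D, restrictB D, fun q => D.1.1 q.1 q.2)
  invFun t := ⟨glue A t.1.1 t.2.1.1 t.2.2 t.1.2.1 t.2.1.2.1, glue_cond hA hAc t.1 t.2.1 t.2.2⟩
  left_inv D := by
    apply Subtype.ext
    apply Subtype.ext
    funext u v
    by_cases hu : u ∈ A <;> by_cases hv : v ∈ A
    · rw [glue_AA hu hv]; rfl
    · rw [glue_AB hu hv]
    · rw [glue_BA hu hv]; exact (D.2.2.2.1 u v hu hv).symm
    · rw [glue_BB hu hv]; rfl
  right_inv t := by
    refine Prod.ext ?_ (Prod.ext ?_ ?_)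
    · apply Subtype.ext
      funext a b
      show (glue A t.1.1 t.2.1.1 t.2.2 t.1.2.1 t.2.1.2.1).1 a b = t.1.1 a b
      rw [glue_AA a.2 b.2]
    · apply Subtype.ext
      funext a b
      show (glue A t.1.1 t.2.1.1 t.2.2 t.1.2.1 t.2.1.2.1).1 a b = t.2.1.1 a b
      rw [glue_BB (Finset.mem_compl.mp a.2) (Finset.mem_compl.mp b.2)]
    · funext q
      show (glue A t.1.1 t.2.1.1 t.2.2 t.1.2.1 t.2.1.2.1).1 q.1 q.2 = t.2.2 q
      rw [glue_AB q.1.2 (Finset.mem_compl.mp q.2.2)]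

noncomputable def cond0Equiv (hA : A.Nonempty) (hAc : Aᶜ.Nonempty) :
    {D : Dgr n // Cond0 A D} ≃ SD {x // x ∈ A} × SD {x // x ∈ Aᶜ} where
  toFun D := (restrictA ⟨D.1, D.2.1⟩, restrictB ⟨D.1, D.2.1⟩)
  invFun t := ⟨glue A t.1.1 t.2.1 (fun _ => false) t.1.2.1 t.2.2.1,
    ⟨glue_cond hA hAc t.1 t.2 (fun _ => false),
      fun a b ha hb => glue_AB ha hb⟩⟩
  left_inv D := by
    apply Subtype.ext
    apply Subtype.ext
    funext u v
    by_cases hu : u ∈ A <;> by_cases hv : v ∈ A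
    · rw [glue_AA hu hv]; rfl
    · rw [glue_AB hu hv]; exact (D.2.2 u v hu hv).symm
    · rw [glue_BA hu hv]; exact (D.2.1.2.2.1 u v hu hv).symm
    · rw [glue_BB hu hv]; rfl
  right_inv t := by
    refine Prod.ext ?_ ?_
    · apply Subtype.ext
      funext a b
      show (glue A t.1.1 t.2.1 (fun _ => false) t.1.2.1 t.2.2.1).1 a b = t.1.1 a b
      rw [glue_AA a.2 b.2]
    · apply Subtype.ext
      funext a b
      show (glue A t.1.1 t.2.1 (fun _ => false) t.1.2.1 t.2.2.1).1 a b = t.2.1 a b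
      rw [glue_BB (Finset.mem_compl.mp a.2) (Finset.mem_compl.mp b.2)]

end Glue

section Cards

instance {α : Type} [Finite α] : Finite (SD α) := Subtype.finite

variable {A : Finset (Fin n)}

lemma card_cond_of (hA : A.Nonempty) (hAc : Aᶜ.Nonempty) :
    Nat.card {D : Dgr n // Cond A D}
      = scd A.card * scd (n - A.card) * 2 ^ (A.card * (n - A.card)) := by
  classical
  rw [Nat.card_congr (condEquiv hA hAc), Nat.card_prod, Nat.card_prod, Nat.card_fun]
  have h1 : Nat.card (SD {x // x ∈ A}) = scd A.card := by
    rw [card_SD, Fintype.card_coe]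
  have h2 : Nat.card (SD {x // x ∈ Aᶜ}) = scd (n - A.card) := by
    rw [card_SD, Fintype.card_coe, Finset.card_compl, Fintype.card_fin]
  have h3 : Nat.card ({x // x ∈ A} × {x // x ∈ Aᶜ}) = A.card * (n - A.card) := by
    rw [Nat.card_prod]
    simp [Nat.card_eq_fintype_card, Finset.card_compl]
  have h4 : Nat.card Bool = 2 := by simp [Nat.card_eq_fintype_card]
  rw [h1, h2, h3, h4]
  ring

lemma card_cond0_of (hA : A.Nonempty) (hAc : Aᶜ.Nonempty) :
    Nat.card {D : Dgr n // Cond0 A D} = scd A.card * scd (n - A.card) := by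
  classical
  rw [Nat.card_congr (cond0Equiv hA hAc), Nat.card_prod]
  have h1 : Nat.card (SD {x // x ∈ A}) = scd A.card := by
    rw [card_SD, Fintype.card_coe]
  have h2 : Nat.card (SD {x // x ∈ Aᶜ}) = scd (n - A.card) := by
    rw [card_SD, Fintype.card_coe, Finset.card_compl, Fintype.card_fin]
  rw [h1, h2]

lemma card_cond_zero (h : ¬A.Nonempty ∨ ¬Aᶜ.Nonempty) :
    Nat.card {D : Dgr n // Cond A D} = 0 := by
  have : IsEmpty {D : Dgr n // Cond A D} := by
    refine ⟨fun p => ?_⟩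
    rcases h with h | h
    · exact h p.2.1
    · exact h p.2.2.1
  simp [Nat.card_of_isEmpty]

lemma card_cond0_zero (h : ¬A.Nonempty ∨ ¬Aᶜ.Nonempty) :
    Nat.card {D : Dgr n // Cond0 A D} = 0 := by
  have : IsEmpty {D : Dgr n // Cond0 A D} := by
    refine ⟨fun p => ?_⟩
    rcases h with h | h
    · exact h p.2.1.1
    · exact h p.2.1.2.1
  simp [Nat.card_of_isEmpty]

lemma card_sum_aux (g : Finset (Fin n) → ℕ) (c : ℕ → ℕ)
    (hzero : ∀ A : Finset (Fin n), (¬A.Nonempty ∨ ¬Aᶜ.Nonempty) → g A = 0)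
    (hval : ∀ A : Finset (Fin n), A.Nonempty → Aᶜ.Nonempty → g A = c A.card) :
    ∑ A : Finset (Fin n), g A = ∑ k ∈ Finset.Icc 1 (n - 1), n.choose k * c k := by
  classical
  have hps : (Finset.univ : Finset (Finset (Fin n)))
      = (Finset.univ : Finset (Fin n)).powerset := Finset.powerset_univ.symm
  rw [hps, Finset.sum_powerset]
  have hcardu : (Finset.univ : Finset (Fin n)).card = n := by simp
  rw [hcardu]
  have hsub : Finset.Icc 1 (n - 1) ⊆ Finset.range (n + 1) := by
    intro k hk
    rw [Finset.mem_Icc] at hk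
    rw [Finset.mem_range]
    omega
  rw [← Finset.sum_subset hsub ?_]
  · refine Finset.sum_congr rfl ?_
    intro j hj
    rw [Finset.mem_Icc] at hj
    have hsum : ∀ B ∈ Finset.powersetCard j (Finset.univ : Finset (Fin n)),
        g B = c j := by
      intro B hB
      have hBc : B.card = j := (Finset.mem_powersetCard_univ.mp hB)
      have hB1 : B.Nonempty := Finset.card_pos.mp (by omega)
      have hB2 : Bᶜ.Nonempty := by
        apply Finset.card_pos.mp
        rw [Finset.card_compl, Fintype.card_fin, hBc]
        omega
      rw [hval B hB1 hB2, hBc]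
    rw [Finset.sum_congr rfl hsum, Finset.sum_const, Finset.card_powersetCard,
      hcardu, smul_eq_mul]
  · intro j hj hj'
    rw [Finset.mem_range] at hj
    rw [Finset.mem_Icc] at hj'
    apply Finset.sum_eq_zero
    intro B hB
    have hBc : B.card = j := (Finset.mem_powersetCard_univ.mp hB)
    apply hzero
    by_cases h0 : j = 0
    · left
      rw [Finset.nonempty_iff_ne_empty]
      simp [← Finset.card_eq_zero, hBc, h0]
    · right
      rw [Finset.nonempty_iff_ne_empty]
      have : Bᶜ.card = 0 := by
        rw [Finset.card_compl, Fintype.card_fin, hBc]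
        omega
      simp [← Finset.card_eq_zero, this]

lemma card_P :
    Nat.card {p : Finset (Fin n) × Dgr n // Cond p.1 p.2}
      = ∑ k ∈ Finset.Icc 1 (n - 1),
          n.choose k * (scd k * scd (n - k) * 2 ^ (k * (n - k))) := by
  classical
  rw [Nat.card_congr (Equiv.subtypeProdEquivSigmaSubtype (fun A (D : Dgr n) => Cond A D)),
    nat_card_sigma]
  exact card_sum_aux _ _ (fun A h => card_cond_zero h)
    (fun A h1 h2 => card_cond_of h1 h2)

lemma card_P0 :
    Nat.card {p : Finset (Fin n) × Dgr n // Cond0 p.1 p.2}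
      = ∑ k ∈ Finset.Icc 1 (n - 1), n.choose k * (scd k * scd (n - k)) := by
  classical
  rw [Nat.card_congr (Equiv.subtypeProdEquivSigmaSubtype (fun A (D : Dgr n) => Cond0 A D)),
    nat_card_sigma]
  exact card_sum_aux _ _ (fun A h => card_cond0_zero h)
    (fun A h1 h2 => card_cond0_of h1 h2)

end Cards

lemma key : 2 * Nat.card {p : Finset (Fin n) × Dgr n // Cond p.1 p.2}
    = 2 * S2 n + Nat.card {p : Finset (Fin n) × Dgr n // Cond0 p.1 p.2} := by
  classical
  haveI : Fintype {D : Dgr n // sccCount D = 2} := Fintype.ofFinite _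
  let e1 : {p : Finset (Fin n) × Dgr n // Cond p.1 p.2}
      ≃ Σ D : {D : Dgr n // sccCount D = 2}, {A : Finset (Fin n) // Cond A D.1} :=
    { toFun := fun p => ⟨⟨p.1.2, cond_scc_two p.2⟩, ⟨p.1.1, p.2⟩⟩
      invFun := fun q => ⟨(q.2.1, q.1.1), q.2.2⟩
      left_inv := fun p => rfl
      right_inv := fun q => rfl }
  let e0 : {p : Finset (Fin n) × Dgr n // Cond0 p.1 p.2}
      ≃ Σ D : {D : Dgr n // sccCount D = 2}, {A : Finset (Fin n) // Cond0 A D.1} :=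
    { toFun := fun p => ⟨⟨p.1.2, cond_scc_two p.2.1⟩, ⟨p.1.1, p.2⟩⟩
      invFun := fun q => ⟨(q.2.1, q.1.1), q.2.2⟩
      left_inv := fun p => rfl
      right_inv := fun q => rfl }
  rw [Nat.card_congr e1, Nat.card_congr e0, nat_card_sigma, nat_card_sigma,
    Finset.mul_sum]
  have hpt : ∀ D ∈ (Finset.univ : Finset {D : Dgr n // sccCount D = 2}),
      2 * Nat.card {A : Finset (Fin n) // Cond A D.1}
        = 2 + Nat.card {A : Finset (Fin n) // Cond0 A D.1} :=
    fun D _ => fiber_count D.2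
  rw [Finset.sum_congr rfl hpt, Finset.sum_add_distrib, Finset.sum_const,
    Finset.card_univ, smul_eq_mul]
  have hS2 : S2 n = Fintype.card {D : Dgr n // sccCount D = 2} := by
    rw [S2, Nat.card_eq_fintype_card]
  rw [hS2]
  ring

end TwoSCC

/-- A digraph with exactly two SCCs is either an ordered pair of strong components
with all cross edges going one way (at least one edge), or an unordered pair of
disconnected strong components. -/
theorem two_scc_inclusion_exclusion (n : ℕ) :
    (S2 n : ℚ) =
      (∑ k ∈ Finset.Icc 1 (n - 1),
        (n.choose k : ℚ) * scd k * scd (n - k) * (2 ^ (k * (n - k)) - 1)) +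
      (∑ k ∈ Finset.Icc 1 (n - 1),
        (n.choose k : ℚ) * scd k * scd (n - k)) / 2 := by
  have hkey := TwoSCC.key (n := n)
  rw [TwoSCC.card_P, TwoSCC.card_P0] at hkey
  have hq := congrArg (fun m : ℕ => (m : ℚ)) hkey
  push_cast at hq
  have hsplit : (∑ k ∈ Finset.Icc 1 (n - 1),
        (n.choose k : ℚ) * scd k * scd (n - k) * (2 ^ (k * (n - k)) - 1))
      = (∑ k ∈ Finset.Icc 1 (n - 1),
          (n.choose k : ℚ) * (scd k * scd (n - k) * 2 ^ (k * (n - k))))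
        - ∑ k ∈ Finset.Icc 1 (n - 1), (n.choose k : ℚ) * (scd k * scd (n - k)) := by
    rw [← Finset.sum_sub_distrib]
    exact Finset.sum_congr rfl (fun k _ => by ring)
  have hassoc : (∑ k ∈ Finset.Icc 1 (n - 1), (n.choose k : ℚ) * scd k * scd (n - k))
      = ∑ k ∈ Finset.Icc 1 (n - 1), (n.choose k : ℚ) * (scd k * scd (n - k)) :=
    Finset.sum_congr rfl (fun k _ => by ring)
  rw [hsplit, hassoc]
  linarith [hq]
end
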